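/- Let P_{3T} be the palette with colors {α,β,β',β'',γ'',ω,ω'} and triples {(α,β,ω),(ω,β',ω'),(ω',β'',γ'')}, and P_LM the palette with colors {α,β',γ,γ',ω} and triples {(α,ω,γ),(ω,β',γ')}. There is no homomorphism from P_{3T} × sym(P_LM) to the palette P_{4/81} with colors {α,β,γ,ω} and triples {(α,β,γ),(α,β,ω),(ω,β,γ)}. -/
import Mathlib


/-- A homomorphism of palettes maps feasible triples to feasible triples. -/
def IsPaletteHom {C C' : Type*} (T : Set (C × C × C)) (T' : Set (C' × C' × C'))
    (f : C → C') : Prop :=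
  ∀ x y z : C, (x, y, z) ∈ T → (f x, f y, f z) ∈ T'

/-- The product of two palettes: coordinatewise feasibility. -/
def prodT {C₁ C₂ : Type*} (T₁ : Set (C₁ × C₁ × C₁)) (T₂ : Set (C₂ × C₂ × C₂)) :
    Set ((C₁ × C₂) × (C₁ × C₂) × (C₁ × C₂)) :=
  {t | (t.1.1, t.2.1.1, t.2.2.1) ∈ T₁ ∧ (t.1.2, t.2.1.2, t.2.2.2) ∈ T₂}

/-- The symmetrization of a palette: colors `C ⊕ C` (`.inl` = original color,
`.inr` = its clone), and for each `(x,y,z) ∈ T` the six triples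
`(x,y,z), (x̄,z,y), (y,x,z̄), (ȳ,z̄,x), (z,x̄,ȳ), (z̄,ȳ,x̄)`. -/
def symT {C : Type*} (T : Set (C × C × C)) :
    Set ((C ⊕ C) × (C ⊕ C) × (C ⊕ C)) :=
  {t | ∃ x y z, (x, y, z) ∈ T ∧
    (t = (.inl x, .inl y, .inl z) ∨ t = (.inr x, .inl z, .inl y) ∨
     t = (.inl y, .inl x, .inr z) ∨ t = (.inr y, .inr z, .inl x) ∨
     t = (.inl z, .inr x, .inr y) ∨ t = (.inr z, .inr y, .inr x))}

/-- The palette `P_3T` with colors `{α, β, β', β'', γ'', ω, ω'}` encoded as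
`α = 0, β = 1, β' = 2, β'' = 3, γ'' = 4, ω = 5, ω' = 6` and triples
`{(α,β,ω), (ω,β',ω'), (ω',β'',γ'')}`. -/
def T_3T : Set (Fin 7 × Fin 7 × Fin 7) := {(0, 1, 5), (5, 2, 6), (6, 3, 4)}

/-- The palette `P_LM` with colors `{α, β', γ, γ', ω}` encoded as
`α = 0, β' = 1, γ = 2, γ' = 3, ω = 4` and triples `{(α,ω,γ), (ω,β',γ')}`. -/
def T_LM : Set (Fin 5 × Fin 5 × Fin 5) := {(0, 4, 2), (4, 1, 3)}

/-- The palette `P_{4/81}` with colors `{α, β, γ, ω}` encoded as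
`α = 0, β = 1, γ = 2, ω = 3` and triples `{(α,β,γ), (α,β,ω), (ω,β,γ)}`. -/
def T481 : Set (Fin 4 × Fin 4 × Fin 4) := {(0, 1, 2), (0, 1, 3), (3, 1, 2)}

/-- There is no homomorphism from `P_3T × sym(P_LM)` to
`P_{4/81}`. -/
theorem stmt13 :
    ¬ ∃ f : Fin 7 × (Fin 5 ⊕ Fin 5) → Fin 4,
      IsPaletteHom (prodT T_3T (symT T_LM)) T481 f := by
  rintro ⟨f, hf⟩
  have m2 : ((4:Fin 5), (1:Fin 5), (3:Fin 5)) ∈ T_LM := by simp [T_LM]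
  have h1 := hf (0, .inl 4) (1, .inl 1) (5, .inl 3)
    ⟨by simp [T_3T], 4, 1, 3, m2, by tauto⟩
  have h2 := hf (5, .inl 3) (2, .inr 4) (6, .inr 1)
    ⟨by simp [T_3T], 4, 1, 3, m2, by tauto⟩
  have h3 := hf (6, .inr 1) (3, .inr 3) (4, .inl 4)
    ⟨by simp [T_3T], 4, 1, 3, m2, by tauto⟩
  simp only [T481, Set.mem_insert_iff, Set.mem_singleton_iff, Prod.mk.injEq] at h1 h2 h3
  rcases h1 with ⟨-,-,a⟩|⟨-,-,a⟩|⟨-,-,a⟩ <;>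
    rcases h2 with ⟨b,-,c⟩|⟨b,-,c⟩|⟨b,-,c⟩ <;>
    rcases h3 with ⟨d,-,-⟩|⟨d,-,-⟩|⟨d,-,-⟩ <;> simp_all
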